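/- Let τ > 0, δ ∈ (0, 1/2), C₁ > 0, a₁, a₂ ∈ ℝ, κ₁ ≥ 0, κ₂ > 0. Define φ₁(x,y) = C₁(x²+y²)^{δ/4} and the operator (Mf)(x,y) = −(1/τ)(x²−y²−a₁)∂_x f − (1/τ)(2xy − a₂)∂_y f + (κ₁/τ)∂_x² f + (κ₂/τ)∂_y² f. Then φ₁ ≥ 0 on X₁ = {(x,y) : x ≥ 1}, φ₁(x,y) → ∞ as x²+y² → ∞, and (Mφ₁)(x,y) → −∞ as x²+y² → ∞ with (x,y) ∈ X₁. -/
import Mathlib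


/-- Partial derivative in `x` of a function of two real variables. -/
noncomputable def pdx (f : ℝ → ℝ → ℝ) (x y : ℝ) : ℝ := deriv (fun x' => f x' y) x

/-- Partial derivative in `y` of a function of two real variables. -/
noncomputable def pdy (f : ℝ → ℝ → ℝ) (x y : ℝ) : ℝ := deriv (fun y' => f x y') y

/-- The generator `M` of the planar diffusion, in real coordinates. -/
noncomputable def Mop (τ a₁ a₂ κ₁ κ₂ : ℝ) (f : ℝ → ℝ → ℝ) (x y : ℝ) : ℝ :=
  -(1 / τ) * (x ^ 2 - y ^ 2 - a₁) * pdx f x y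
    - (1 / τ) * (2 * x * y - a₂) * pdy f x y
    + (κ₁ / τ) * pdx (fun x' y' => pdx f x' y') x y
    + (κ₂ / τ) * pdy (fun x' y' => pdy f x' y') x y

private lemma helper_div (c q : ℝ) (hc : 0 < c) (hq : 0 < q) (K : ℝ) :
    ∃ R : ℝ, 1 ≤ R ∧ ∀ u : ℝ, R ≤ u → K ≤ c * u ^ (q : ℝ) := by
  have ha1 : (1:ℝ) ≤ |K| / c + 1 := by
    have : 0 ≤ |K| / c := div_nonneg (abs_nonneg K) hc.le
    linarith
  refine ⟨max 1 ((|K| / c + 1) ^ (1/q : ℝ)), le_max_left _ _, fun u hu => ?_⟩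
  have hu1 : (1:ℝ) ≤ u := le_trans (le_max_left _ _) hu
  have h2 : (|K| / c + 1) ^ (1/q : ℝ) ≤ u := le_trans (le_max_right _ _) hu
  have h3 : ((|K| / c + 1) ^ (1/q : ℝ)) ^ (q : ℝ) ≤ u ^ (q : ℝ) :=
    Real.rpow_le_rpow (Real.rpow_nonneg (by linarith) _) h2 hq.le
  have h4 : ((|K| / c + 1) ^ (1/q : ℝ)) ^ (q : ℝ) = |K| / c + 1 := by
    rw [← Real.rpow_mul (by linarith : (0:ℝ) ≤ |K| / c + 1), one_div_mul_cancel hq.ne',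
      Real.rpow_one]
  rw [h4] at h3
  have h5 : c * (|K| / c + 1) = |K| + c := by field_simp
  have h6 : c * (|K| / c + 1) ≤ c * u ^ (q : ℝ) := by nlinarith
  have := le_abs_self K
  linarith

private lemma L1 (C q b x : ℝ) (h : x ^ 2 + b ≠ 0) :
    HasDerivAt (fun t : ℝ => C * (t ^ 2 + b) ^ (q : ℝ))
      (C * (2 * x * q * (x ^ 2 + b) ^ (q - 1 : ℝ))) x := by
  have h1 : HasDerivAt (fun t : ℝ => t ^ 2 + b) (2 * x) x := by
    simpa using (hasDerivAt_pow 2 x).add_const b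
  have h2 := (h1.rpow_const (p := q) (Or.inl h)).const_mul C
  simpa [mul_comm, mul_assoc, mul_left_comm] using h2

private lemma L2 (C q b x : ℝ) (h : x ^ 2 + b ≠ 0) :
    HasDerivAt (fun t : ℝ => C * (2 * t * q * (t ^ 2 + b) ^ (q - 1 : ℝ)))
      (C * (2 * q * (x ^ 2 + b) ^ (q - 1 : ℝ)
        + 2 * x * q * (2 * x * (q - 1) * (x ^ 2 + b) ^ (q - 2 : ℝ)))) x := by
  have h1 : HasDerivAt (fun t : ℝ => t ^ 2 + b) (2 * x) x := by
    simpa using (hasDerivAt_pow 2 x).add_const b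
  have h2 : HasDerivAt (fun t : ℝ => (t ^ 2 + b) ^ (q - 1 : ℝ))
      (2 * x * (q - 1) * (x ^ 2 + b) ^ (q - 1 - 1 : ℝ)) x := h1.rpow_const (Or.inl h)
  have h3 : HasDerivAt (fun t : ℝ => 2 * t * q) (2 * q) x := by
    simpa using ((hasDerivAt_id x).const_mul 2).mul_const q
  have h4 := (h3.mul h2).const_mul C
  have he : q - 1 - 1 = q - 2 := by ring
  rw [he] at h4
  exact h4

/-- the Lyapunov function `φ₁(x,y) = C₁ (x²+y²)^{δ/4}` on
`X₁ = {x ≥ 1}`: it is nonnegative, tends to `∞` as `x²+y² → ∞`, and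
`Mφ₁ → −∞` as `x²+y² → ∞` in `X₁`. -/
theorem LF1 (τ δ C₁ a₁ a₂ κ₁ κ₂ : ℝ) (hτ : 0 < τ)
    (hδ : δ ∈ Set.Ioo (0 : ℝ) (1 / 2)) (hC : 0 < C₁)
    (hκ₁ : 0 ≤ κ₁) (hκ₂ : 0 < κ₂)
    (φ₁ : ℝ → ℝ → ℝ)
    (hφ : ∀ x y, φ₁ x y = C₁ * (x ^ 2 + y ^ 2) ^ (δ / 4 : ℝ)) :
    (∀ x y, 1 ≤ x → 0 ≤ φ₁ x y) ∧
    (∀ K : ℝ, ∃ R : ℝ, ∀ x y : ℝ, R ≤ x ^ 2 + y ^ 2 → K ≤ φ₁ x y) ∧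
    (∀ K : ℝ, ∃ R : ℝ, ∀ x y : ℝ, 1 ≤ x → R ≤ x ^ 2 + y ^ 2 →
      Mop τ a₁ a₂ κ₁ κ₂ φ₁ x y ≤ K) := by
  obtain ⟨hδ0, hδ2⟩ := hδ
  have hq0 : 0 < δ / 4 := by linarith
  have hq18 : δ / 4 < 1 / 8 := by linarith
  refine ⟨?_, ?_, ?_⟩
  · intro x y hx
    rw [hφ]
    positivity
  · intro K
    obtain ⟨R, hR1, hR⟩ := helper_div C₁ (δ/4) hC hq0 K
    exact ⟨R, fun x y h => by rw [hφ]; exact hR _ h⟩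
  · intro K
    have hgq : φ₁ = fun a b => C₁ * (a ^ 2 + b ^ 2) ^ (δ / 4 : ℝ) := by
      funext a b; exact hφ a b
    set q : ℝ := δ / 4 with hqdef
    have hc0 : 0 < 2 * C₁ * q / τ := by positivity
    obtain ⟨R, hR1, hR⟩ := helper_div (2 * C₁ * q / τ) q hc0 hq0
      ((2 * C₁ * q / τ) * (|a₁| + |a₂| + κ₁ + κ₂) - K)
    refine ⟨R, fun x y hx hu => ?_⟩
    rw [hgq]
    have hu1 : (1:ℝ) ≤ x ^ 2 + y ^ 2 := le_trans hR1 hu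
    have hu0 : (0:ℝ) < x ^ 2 + y ^ 2 := by linarith
    have hne : x ^ 2 + y ^ 2 ≠ 0 := ne_of_gt hu0
    -- first partials
    have h₁ : pdx (fun a b => C₁ * (a ^ 2 + b ^ 2) ^ (q : ℝ)) x y
        = C₁ * (2 * x * q * (x ^ 2 + y ^ 2) ^ (q - 1 : ℝ)) := (L1 C₁ q (y ^ 2) x hne).deriv
    have h₂ : pdy (fun a b => C₁ * (a ^ 2 + b ^ 2) ^ (q : ℝ)) x y
        = C₁ * (2 * y * q * (x ^ 2 + y ^ 2) ^ (q - 1 : ℝ)) := by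
      have hne2 : y ^ 2 + x ^ 2 ≠ 0 := by rw [add_comm]; exact hne
      show deriv (fun t : ℝ => C₁ * (x ^ 2 + t ^ 2) ^ (q : ℝ)) y = _
      rw [show (fun t : ℝ => C₁ * (x ^ 2 + t ^ 2) ^ (q : ℝ))
          = (fun t : ℝ => C₁ * (t ^ 2 + x ^ 2) ^ (q : ℝ)) from by
        funext s; rw [add_comm (x ^ 2)]]
      rw [(L1 C₁ q (x ^ 2) y hne2).deriv, add_comm (y ^ 2)]
    -- second partials
    have h₃ : pdx (fun a b => pdx (fun a' b' => C₁ * (a' ^ 2 + b' ^ 2) ^ (q : ℝ)) a b) x y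
        = C₁ * (2 * q * (x ^ 2 + y ^ 2) ^ (q - 1 : ℝ)
          + 2 * x * q * (2 * x * (q - 1) * (x ^ 2 + y ^ 2) ^ (q - 2 : ℝ))) := by
      have hev : (fun t : ℝ => pdx (fun a b => C₁ * (a ^ 2 + b ^ 2) ^ (q : ℝ)) t y)
          =ᶠ[nhds x] (fun t : ℝ => C₁ * (2 * t * q * (t ^ 2 + y ^ 2) ^ (q - 1 : ℝ))) := by
        filter_upwards [isOpen_Ioi.mem_nhds (show (0:ℝ) < x by linarith)] with t ht
        have ht' : (0:ℝ) < t := ht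
        exact (L1 C₁ q (y ^ 2) t (ne_of_gt (by nlinarith [mul_pos ht' ht', sq_nonneg y] :
          (0:ℝ) < t ^ 2 + y ^ 2))).deriv
      show deriv (fun t : ℝ => pdx (fun a b => C₁ * (a ^ 2 + b ^ 2) ^ (q : ℝ)) t y) x = _
      rw [hev.deriv_eq]
      exact (L2 C₁ q (y ^ 2) x hne).deriv
    have h₄ : pdy (fun a b => pdy (fun a' b' => C₁ * (a' ^ 2 + b' ^ 2) ^ (q : ℝ)) a b) x y
        = C₁ * (2 * q * (x ^ 2 + y ^ 2) ^ (q - 1 : ℝ)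
          + 2 * y * q * (2 * y * (q - 1) * (x ^ 2 + y ^ 2) ^ (q - 2 : ℝ))) := by
      have hfun : (fun t : ℝ => pdy (fun a b => C₁ * (a ^ 2 + b ^ 2) ^ (q : ℝ)) x t)
          = (fun t : ℝ => C₁ * (2 * t * q * (t ^ 2 + x ^ 2) ^ (q - 1 : ℝ))) := by
        funext t
        have hne2 : t ^ 2 + x ^ 2 ≠ 0 := ne_of_gt (by nlinarith)
        show deriv (fun s : ℝ => C₁ * (x ^ 2 + s ^ 2) ^ (q : ℝ)) t = _
        rw [show (fun s : ℝ => C₁ * (x ^ 2 + s ^ 2) ^ (q : ℝ))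
            = (fun s : ℝ => C₁ * (s ^ 2 + x ^ 2) ^ (q : ℝ)) from by
          funext s; rw [add_comm (x ^ 2)]]
        exact (L1 C₁ q (x ^ 2) t hne2).deriv
      show deriv (fun t : ℝ => pdy (fun a b => C₁ * (a ^ 2 + b ^ 2) ^ (q : ℝ)) x t) y = _
      rw [hfun]
      have hd := (L2 C₁ q (x ^ 2) y (by rw [add_comm]; exact hne)).deriv
      rw [hd, add_comm (y ^ 2) (x ^ 2)]
    have hM : Mop τ a₁ a₂ κ₁ κ₂ (fun a b => C₁ * (a ^ 2 + b ^ 2) ^ (q : ℝ)) x y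
        = -(1 / τ) * (x ^ 2 - y ^ 2 - a₁) * (C₁ * (2 * x * q * (x ^ 2 + y ^ 2) ^ (q - 1 : ℝ)))
          - (1 / τ) * (2 * x * y - a₂) * (C₁ * (2 * y * q * (x ^ 2 + y ^ 2) ^ (q - 1 : ℝ)))
          + (κ₁ / τ) * (C₁ * (2 * q * (x ^ 2 + y ^ 2) ^ (q - 1 : ℝ)
            + 2 * x * q * (2 * x * (q - 1) * (x ^ 2 + y ^ 2) ^ (q - 2 : ℝ))))
          + (κ₂ / τ) * (C₁ * (2 * q * (x ^ 2 + y ^ 2) ^ (q - 1 : ℝ)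
            + 2 * y * q * (2 * y * (q - 1) * (x ^ 2 + y ^ 2) ^ (q - 2 : ℝ)))) := by
      unfold Mop
      rw [h₁, h₂, h₃, h₄]
    rw [hM]
    -- abbreviations
    set w1 : ℝ := (x ^ 2 + y ^ 2) ^ (q - 1 : ℝ) with hw1
    set w2 : ℝ := (x ^ 2 + y ^ 2) ^ (q - 2 : ℝ) with hw2
    have hw1pos : 0 ≤ w1 := Real.rpow_nonneg hu0.le _
    have hw2pos : 0 ≤ w2 := Real.rpow_nonneg hu0.le _
    have hw1le : w1 ≤ 1 := Real.rpow_le_one_of_one_le_of_nonpos hu1 (by linarith)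
    have hvppos : 0 < (x ^ 2 + y ^ 2) ^ (q : ℝ) := Real.rpow_pos_of_pos hu0 q
    have hw : w1 * (x ^ 2 + y ^ 2) = (x ^ 2 + y ^ 2) ^ (q : ℝ) := by
      rw [hw1, ← Real.rpow_add_one hne]
      norm_num
    -- main rearrangement
    have key : -(1 / τ) * (x ^ 2 - y ^ 2 - a₁) * (C₁ * (2 * x * q * w1))
          - (1 / τ) * (2 * x * y - a₂) * (C₁ * (2 * y * q * w1))
          + (κ₁ / τ) * (C₁ * (2 * q * w1 + 2 * x * q * (2 * x * (q - 1) * w2)))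
          + (κ₂ / τ) * (C₁ * (2 * q * w1 + 2 * y * q * (2 * y * (q - 1) * w2)))
        = (2 * C₁ * q / τ) * (-(x * ((x ^ 2 + y ^ 2) ^ (q : ℝ)))
            + (a₁ * x + a₂ * y) * w1
            + κ₁ * (w1 + 2 * x ^ 2 * (q - 1) * w2)
            + κ₂ * (w1 + 2 * y ^ 2 * (q - 1) * w2)) := by
      rw [← hw]
      ring
    rw [key]
    clear key hM h₁ h₂ h₃ h₄ hgq hφ
    -- bounds
    have hb1 : -(x * ((x ^ 2 + y ^ 2) ^ (q : ℝ))) ≤ -((x ^ 2 + y ^ 2) ^ (q : ℝ)) := by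
      have h := mul_le_mul_of_nonneg_right hx hvppos.le
      linarith only [h]
    have hsx : |x| ≤ Real.sqrt (x ^ 2 + y ^ 2) := by
      rw [← Real.sqrt_sq_eq_abs]; exact Real.sqrt_le_sqrt (by linarith only [sq_nonneg y])
    have hsy : |y| ≤ Real.sqrt (x ^ 2 + y ^ 2) := by
      rw [← Real.sqrt_sq_eq_abs]; exact Real.sqrt_le_sqrt (by linarith only [sq_nonneg x])
    have hs0 : 0 ≤ Real.sqrt (x ^ 2 + y ^ 2) := Real.sqrt_nonneg _
    have hab : a₁ * x + a₂ * y ≤ (|a₁| + |a₂|) * Real.sqrt (x ^ 2 + y ^ 2) := by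
      have e1 := abs_mul a₁ x
      have e2 := abs_mul a₂ y
      have m1 := mul_le_mul_of_nonneg_left hsx (abs_nonneg a₁)
      have m2 := mul_le_mul_of_nonneg_left hsy (abs_nonneg a₂)
      have hexp2 : (|a₁| + |a₂|) * Real.sqrt (x ^ 2 + y ^ 2)
          = |a₁| * Real.sqrt (x ^ 2 + y ^ 2) + |a₂| * Real.sqrt (x ^ 2 + y ^ 2) := by ring
      linarith only [le_abs_self (a₁ * x), le_abs_self (a₂ * y), e1, e2, m1, m2, hexp2]
    have hsw : Real.sqrt (x ^ 2 + y ^ 2) * w1 ≤ 1 := by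
      rw [hw1, Real.sqrt_eq_rpow, ← Real.rpow_add hu0]
      exact Real.rpow_le_one_of_one_le_of_nonpos hu1 (by linarith)
    have hb2 : (a₁ * x + a₂ * y) * w1 ≤ |a₁| + |a₂| := by
      have s1 : (a₁ * x + a₂ * y) * w1 ≤ (|a₁| + |a₂|) * Real.sqrt (x ^ 2 + y ^ 2) * w1 :=
        mul_le_mul_of_nonneg_right hab hw1pos
      have s2 : (|a₁| + |a₂|) * Real.sqrt (x ^ 2 + y ^ 2) * w1 ≤ (|a₁| + |a₂|) * 1 := by
        rw [mul_assoc]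
        exact mul_le_mul_of_nonneg_left hsw (by positivity)
      linarith only [s1, s2]
    have hZx : 2 * x ^ 2 * (q - 1) * w2 ≤ 0 := by
      have h1 : (q - 1) * w2 ≤ 0 :=
        mul_nonpos_of_nonpos_of_nonneg (by linarith only [hq18]) hw2pos
      have h2 : (0:ℝ) ≤ 2 * x ^ 2 := by positivity
      calc 2 * x ^ 2 * (q - 1) * w2 = 2 * x ^ 2 * ((q - 1) * w2) := by ring
        _ ≤ 2 * x ^ 2 * 0 := mul_le_mul_of_nonneg_left h1 h2
        _ = 0 := by ring
    have hZy : 2 * y ^ 2 * (q - 1) * w2 ≤ 0 := by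
      have h1 : (q - 1) * w2 ≤ 0 :=
        mul_nonpos_of_nonpos_of_nonneg (by linarith only [hq18]) hw2pos
      have h2 : (0:ℝ) ≤ 2 * y ^ 2 := by positivity
      calc 2 * y ^ 2 * (q - 1) * w2 = 2 * y ^ 2 * ((q - 1) * w2) := by ring
        _ ≤ 2 * y ^ 2 * 0 := mul_le_mul_of_nonneg_left h1 h2
        _ = 0 := by ring
    have hb3 : κ₁ * (w1 + 2 * x ^ 2 * (q - 1) * w2) ≤ κ₁ := by
      have h3 : w1 + 2 * x ^ 2 * (q - 1) * w2 ≤ 1 := by linarith only [hw1le, hZx]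
      calc κ₁ * (w1 + 2 * x ^ 2 * (q - 1) * w2) ≤ κ₁ * 1 :=
            mul_le_mul_of_nonneg_left h3 hκ₁
        _ = κ₁ := mul_one κ₁
    have hb4 : κ₂ * (w1 + 2 * y ^ 2 * (q - 1) * w2) ≤ κ₂ := by
      have h3 : w1 + 2 * y ^ 2 * (q - 1) * w2 ≤ 1 := by linarith only [hw1le, hZy]
      calc κ₂ * (w1 + 2 * y ^ 2 * (q - 1) * w2) ≤ κ₂ * 1 :=
            mul_le_mul_of_nonneg_left h3 hκ₂.le
        _ = κ₂ := mul_one κ₂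
    have hsum : -(x * ((x ^ 2 + y ^ 2) ^ (q : ℝ)))
            + (a₁ * x + a₂ * y) * w1
            + κ₁ * (w1 + 2 * x ^ 2 * (q - 1) * w2)
            + κ₂ * (w1 + 2 * y ^ 2 * (q - 1) * w2)
        ≤ -((x ^ 2 + y ^ 2) ^ (q : ℝ)) + (|a₁| + |a₂| + κ₁ + κ₂) := by
      linarith only [hb1, hb2, hb3, hb4]
    have hmul := mul_le_mul_of_nonneg_left hsum hc0.le
    have hRq := hR (x ^ 2 + y ^ 2) hu
    have hexp : 2 * C₁ * q / τ * (-((x ^ 2 + y ^ 2) ^ (q : ℝ)) + (|a₁| + |a₂| + κ₁ + κ₂))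
        = 2 * C₁ * q / τ * (|a₁| + |a₂| + κ₁ + κ₂)
          - 2 * C₁ * q / τ * (x ^ 2 + y ^ 2) ^ (q : ℝ) := by ring
    linarith only [hmul, hRq, hexp]
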